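/- arXiv:2311.01791 — 2 statements merged into one kernel-verified Lean document; each statement's English description precedes it below -/
import Mathlib

section
/- For every integer n ≥ 2 and every integer ℓ ≥ 1 with 2ℓ+1 ≤ n, one has D_n(x̂_{n,2ℓ+1}) = x̄_{n,2ℓ} in R_n. -/
open MvPolynomial

noncomputable section

/-- `R n` is the polynomial ring `ℚ[x_{n,0}, …, x_{n,n}]`. -/
abbrev R (n : ℕ) : Type := MvPolynomial (Fin (n + 1)) ℚ

/-- The variable `x_{n,k}` of `R n` (and `0` for out-of-range indices, which never occur below). -/
def x (n k : ℕ) : R n := if h : k < n + 1 then X ⟨k, h⟩ else 0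

/-- The derivation `D_n = Σ_{k=0}^{n-1} x_{n,k} ∂/∂x_{n,k+1}`, i.e. the unique `ℚ`-linear
derivation with `D_n(x_{n,k}) = x_{n,k-1}` for `1 ≤ k ≤ n` and `D_n(x_{n,0}) = 0`. -/
def D (n : ℕ) : Derivation ℚ (R n) (R n) :=
  MvPolynomial.mkDerivation ℚ fun j : Fin (n + 1) =>
    if (j : ℕ) = 0 then 0 else x n ((j : ℕ) - 1)

/-- `x̄_{n,2ℓ} := x_{n,ℓ}² + 2 Σ_{i=0}^{ℓ−1} (−1)^{ℓ+i} x_{n,i} x_{n,2ℓ−i}`. -/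
def xbarE (n l : ℕ) : R n :=
  x n l ^ 2 + 2 * ∑ i ∈ Finset.range l, (-1 : R n) ^ (l + i) * x n i * x n (2 * l - i)

/-- `x̂_{n,2ℓ+1} := x_{n,ℓ}x_{n,ℓ+1} + Σ_{i=0}^{ℓ−1} (−1)^{ℓ+i}(2ℓ−2i+1) x_{n,i} x_{n,2ℓ+1−i}`. -/
def xhatO (n l : ℕ) : R n :=
  x n l * x n (l + 1) +
    ∑ i ∈ Finset.range l,
      (-1 : R n) ^ (l + i) * ((2 * l - 2 * i + 1 : ℕ) : R n) * x n i * x n (2 * l + 1 - i)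

/-- `x̄_{n,2ℓ+1} := x_{n,1}·x̄_{n,2ℓ} − x_{n,0}·x̂_{n,2ℓ+1}`. -/
def xbarO (n l : ℕ) : R n := x n 1 * xbarE n l - x n 0 * xhatO n l

/-- `x̄_{n,k}` for `k ≥ 2` (even or odd case). -/
def xbar (n k : ℕ) : R n := if k % 2 = 0 then xbarE n (k / 2) else xbarO n (k / 2)

lemma Dx (n k : ℕ) (h : k < n + 1) : D n (x n k) = if k = 0 then 0 else x n (k - 1) := by
  rw [x, dif_pos h, D, mkDerivation_X]

lemma Dx0 (n : ℕ) : D n (x n 0) = 0 := by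
  rw [Dx n 0 (Nat.succ_pos n), if_pos rfl]

lemma Dxs (n k : ℕ) (hk : 1 ≤ k) (h : k ≤ n) : D n (x n k) = x n (k - 1) := by
  rw [Dx n k (by omega), if_neg (by omega)]

lemma Dconstmul (n k m : ℕ) (p : R n) :
    D n ((-1:R n)^k * (m:R n) * p) = (-1:R n)^k * (m:R n) * D n p := by
  have hc : ∀ q : R n, (-1:R n)^k * (m:R n) * q = ((-1)^k * m : ℚ) • q := by
    intro q
    rw [smul_eq_C_mul, map_mul, map_pow, map_neg, map_one, map_natCast]
  rw [hc, Derivation.map_smul, hc]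

/-- For every `n ≥ 2` and every `ℓ ≥ 1` with `2ℓ+1 ≤ n`, `D_n(x̂_{n,2ℓ+1}) = x̄_{n,2ℓ}`. -/
theorem statement1 (n l : ℕ) (hn : 2 ≤ n) (hl : 1 ≤ l) (hln : 2 * l + 1 ≤ n) :
    D n (xhatO n l) = xbarE n l := by
  obtain ⟨m, rfl⟩ : ∃ m, l = m + 1 := ⟨l - 1, by omega⟩
  have hm : 2 * m + 3 ≤ n := by omega
  rw [xhatO, xbarE, map_add, Derivation.leibniz, map_sum]
  -- rewrite the leading product
  rw [Dxs n (m + 1) (by omega) (by omega), Dxs n (m + 1 + 1) (by omega) (by omega)]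
  simp only [smul_eq_mul]
  -- rewrite each summand
  have hterm : ∀ i ∈ Finset.range (m + 1),
      D n ((-1 : R n) ^ (m + 1 + i) * ((2 * (m + 1) - 2 * i + 1 : ℕ) : R n) * x n i *
          x n (2 * (m + 1) + 1 - i)) =
      (-1 : R n) ^ (m + 1 + i) * ((2 * (m + 1) - 2 * i + 1 : ℕ) : R n) *
        (x n i * x n (2 * (m + 1) - i)) +
      (-1 : R n) ^ (m + 1 + i) * ((2 * (m + 1) - 2 * i + 1 : ℕ) : R n) *
        (x n (2 * (m + 1) + 1 - i) * D n (x n i)) := by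
    intro i hi
    simp only [Finset.mem_range] at hi
    rw [mul_assoc, Dconstmul, Derivation.leibniz, smul_eq_mul, smul_eq_mul,
      Dxs n (2 * (m + 1) + 1 - i) (by omega) (by omega),
      show 2 * (m + 1) + 1 - i - 1 = 2 * (m + 1) - i from by omega, mul_add]
  rw [Finset.sum_congr rfl hterm, Finset.sum_add_distrib, Finset.sum_range_succ,
    Finset.sum_range_succ' (fun i => (-1 : R n) ^ (m + 1 + i) *
      ((2 * (m + 1) - 2 * i + 1 : ℕ) : R n) * (x n (2 * (m + 1) + 1 - i) * D n (x n i))),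
    Dx0, mul_zero, mul_zero]
  -- rewrite the shifted sum
  have hQ : ∀ i ∈ Finset.range m,
      (-1 : R n) ^ (m + 1 + (i + 1)) * ((2 * (m + 1) - 2 * (i + 1) + 1 : ℕ) : R n) *
        (x n (2 * (m + 1) + 1 - (i + 1)) * D n (x n (i + 1))) =
      (-1 : R n) ^ (m + 1 + (i + 1)) * ((2 * (m + 1) - 2 * (i + 1) + 1 : ℕ) : R n) *
        (x n (2 * (m + 1) - i) * x n i) := by
    intro i hi
    simp only [Finset.mem_range] at hi
    rw [Dxs n (i + 1) (by omega) (by omega),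
      show 2 * (m + 1) + 1 - (i + 1) = 2 * (m + 1) - i from by omega,
      Nat.add_sub_cancel]
  rw [Finset.sum_congr rfl hQ]
  -- peel the top of the RHS sum
  rw [Finset.mul_sum, Finset.sum_range_succ]
  -- the combined middle sums
  have hsum : (∑ i ∈ Finset.range m,
      (-1 : R n) ^ (m + 1 + (i + 1)) * ((2 * (m + 1) - 2 * (i + 1) + 1 : ℕ) : R n) *
        (x n (2 * (m + 1) - i) * x n i)) +
      (∑ i ∈ Finset.range m,
      (-1 : R n) ^ (m + 1 + i) * ((2 * (m + 1) - 2 * i + 1 : ℕ) : R n) *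
        (x n i * x n (2 * (m + 1) - i))) =
      ∑ i ∈ Finset.range m,
        2 * ((-1 : R n) ^ (m + 1 + i) * x n i * x n (2 * (m + 1) - i)) := by
    rw [← Finset.sum_add_distrib]
    refine Finset.sum_congr rfl fun i hi => ?_
    simp only [Finset.mem_range] at hi
    have h2 : 2 * (i + 1) ≤ 2 * (m + 1) := by omega
    have h3 : 2 * i ≤ 2 * (m + 1) := by omega
    push_cast [Nat.cast_sub h2, Nat.cast_sub h3]
    ring
  -- final bookkeeping
  have hc3 : ((2 * (m + 1) - 2 * m + 1 : ℕ) : R n) = 3 := by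
    norm_num [show 2 * (m + 1) - 2 * m = 2 from by omega]
  rw [show 2 * (m + 1) - m = m + 2 from by omega, show m + 1 + 1 - 1 = m + 1 from rfl,
    show m + 1 - 1 = m from rfl, hc3, show m + 1 + m = 2 * m + 1 from by omega,
    Odd.neg_one_pow ⟨m, by ring⟩]
  linear_combination hsum
end
end

section
/- Let d ≥ 1, r ≥ 1 and k₁, …, k_r ≥ 1 be integers with k₁ + ⋯ + k_r ≥ d − r. Then for every u ∈ R_∞^{(d−1)}, the element x_{k₁+1,0}·x_{k₂+1,0}⋯x_{k_r+1,0}·u lies in D_∞(R_∞^{(d)}). In particular, for every integer k ≥ d−1 and every u ∈ R_∞^{(d−1)}, x_{k+1,0}·u ∈ D_∞(R_∞^{(d)}); i.e. e_k := x_{k+1,0} annihilates the S-module R_∞^{(d−1)}/D_∞(R_∞^{(d)}). -/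
open MvPolynomial

noncomputable section

/-- The index set `{(n,k) : 2 ≤ n, 0 ≤ k ≤ n}` of the variables `x_{n,k}` of `R_∞`. -/
abbrev Idx : Type := {p : ℕ × ℕ // 2 ≤ p.1 ∧ p.2 ≤ p.1}

/-- The polynomial ring `R_∞ = ℚ[x_{n,k} : n ≥ 2, 0 ≤ k ≤ n]`. -/
abbrev Rinf : Type := MvPolynomial Idx ℚ

/-- The variable `x_{n,k}` (and `0` for out-of-range indices, which never occur below). -/
def xv (n k : ℕ) : Rinf := if h : 2 ≤ n ∧ k ≤ n then X ⟨(n, k), h⟩ else 0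

/-- The derivation `D_∞` with `D_∞(x_{n,k}) = x_{n,k−1}` for `1 ≤ k ≤ n` and
`D_∞(x_{n,0}) = 0`. -/
def Dinf : Derivation ℚ Rinf Rinf :=
  MvPolynomial.mkDerivation ℚ fun s : Idx =>
    if s.1.2 = 0 then 0 else xv s.1.1 (s.1.2 - 1)

/-- The weight `wt(x_{n,k}) = k`. -/
def wt : Idx → ℕ := fun s => s.1.2

/-- `R_∞^{(d)}`: the `ℚ`-span of the monomials of weight `d`. -/
def W (d : ℕ) : Submodule ℚ Rinf := weightedHomogeneousSubmodule ℚ wt d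

/-! `Dinf` is the lowering operator of an `sl₂`-triple `(Dinf, Uinf, ⁅Dinf, Uinf⁆)` acting on `R_∞`,
and the bigraded piece `W a ⊓ Wn t` (weight `a`, total first index `t`) is a weight space of
eigenvalue `t - 2a`. An element `y` of positive eigenvalue is `Dinf`-exact: from
`Dinf (Uinf y) - Uinf (Dinf y) = (t - 2a) y` it suffices that `Uinf (Dinf y)` is, and by induction
on `a` (more generally for `Uinf^[m] y`) this holds because `Dinf` kills weight zero.
For `u ∈ W (d - 1)` and `c` of weight `0` whose monomials have first indices summing to at least
`d`, every monomial of `c * u` has eigenvalue `≥ d + (d - 1) - 2(d - 1) > 0`. -/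

namespace MvPolynomial

variable {R σ M : Type*} [CommSemiring R]

theorem derivation_mem_of_isWeightedHomogeneous [AddCancelCommMonoid M] {w : σ → M} {n : M}
    (Δ : Derivation R (MvPolynomial σ R) (MvPolynomial σ R)) (N : Submodule R (MvPolynomial σ R))
    (hΔ : ∀ i m, m + w i = n → ∀ q : MvPolynomial σ R, q.IsWeightedHomogeneous w m →
      q * Δ (X i) ∈ N)
    {p : MvPolynomial σ R} (hp : p.IsWeightedHomogeneous w n) : Δ p ∈ N := by
  induction hp using IsWeightedHomogeneous.induction_on with
  | zero => simp
  | add p q _ _ hp hq => simpa using N.add_mem hp hq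
  | monomial d r hd =>
    have hΔX : Δ = mkDerivation R (fun i => Δ (X i)) := derivation_ext fun i => by simp
    rw [hΔX, mkDerivation_monomial]
    refine N.smul_mem _ (N.sum_mem fun i hi => ?_)
    have hdi : d i ≠ 0 := Finsupp.mem_support_iff.mp hi
    dsimp only
    rw [smul_eq_mul]
    exact hΔ i _ (by rw [Finsupp.weight_sub_single_add hdi, hd]) _
      (isWeightedHomogeneous_monomial _ _ _ rfl)

theorem IsWeightedHomogeneous.mkDerivation_weight_smul_X {w : σ → ℕ} {n : ℕ}
    {p : MvPolynomial σ R} (hp : p.IsWeightedHomogeneous w n) :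
    mkDerivation R (fun i => (w i : R) • X i) p = (n : R) • p := by
  induction hp using IsWeightedHomogeneous.induction_on with
  | zero => simp
  | add p q _ _ hp hq => simp [hp, hq, smul_add]
  | monomial d r hd =>
    rw [mkDerivation_monomial, ← hd, Finsupp.weight_apply, Finsupp.sum, Finsupp.sum,
      Nat.cast_sum, Finset.sum_smul, Finset.smul_sum]
    refine Finset.sum_congr rfl fun i hi => ?_
    have hdi : d i ≠ 0 := Finsupp.mem_support_iff.mp hi
    simp only [X, smul_monomial, smul_eq_mul, monomial_mul,
      Finsupp.sub_add_single_one_cancel hdi, Nat.cast_mul]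
    congr 1
    ring

end MvPolynomial

def nwt : Idx → ℕ := fun s => s.1.1

def Wn (t : ℕ) : Submodule ℚ Rinf := weightedHomogeneousSubmodule ℚ nwt t

/-- The coefficient `(k + 1)(n - k)` makes `⁅Dinf, Uinf⁆` multiply `x_{n,k}` by `n - 2k`. -/
def Uinf : Derivation ℚ Rinf Rinf :=
  mkDerivation ℚ fun s : Idx => (((s.1.2 : ℚ) + 1) * ((s.1.1 : ℚ) - s.1.2)) • xv s.1.1 (s.1.2 + 1)

lemma xv_eq {n k : ℕ} (hn : 2 ≤ n) (hk : k ≤ n) : xv n k = X ⟨(n, k), hn, hk⟩ := by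
  rw [xv, dif_pos]

lemma xv_mem (n k : ℕ) : xv n k ∈ W k ⊓ Wn n := by
  unfold xv
  split_ifs
  · exact ⟨isWeightedHomogeneous_X _ _ _, isWeightedHomogeneous_X _ _ _⟩
  · exact zero_mem _

lemma Dinf_X (s : Idx) : Dinf (X s) = if s.1.2 = 0 then 0 else xv s.1.1 (s.1.2 - 1) := by
  simp [Dinf]

lemma Uinf_X (s : Idx) :
    Uinf (X s) = (((s.1.2 : ℚ) + 1) * ((s.1.1 : ℚ) - s.1.2)) • xv s.1.1 (s.1.2 + 1) := by
  simp [Uinf]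

lemma Dinf_Uinf_X (s : Idx) :
    Dinf (Uinf (X s)) = (((s.1.2 : ℚ) + 1) * ((s.1.1 : ℚ) - s.1.2)) • X s := by
  obtain ⟨⟨n, k⟩, hn, hk⟩ := s
  dsimp only at hn hk ⊢
  rw [Uinf_X, Derivation.map_smul]
  rcases hk.lt_or_eq with hk | rfl
  · simp [xv_eq hn hk, Dinf_X, xv_eq hn hk.le]
  · simp

lemma Uinf_Dinf_X (s : Idx) :
    Uinf (Dinf (X s)) = ((s.1.2 : ℚ) * ((s.1.1 : ℚ) - s.1.2 + 1)) • X s := by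
  obtain ⟨⟨n, _ | j⟩, hn, hk⟩ := s
  · simp [Dinf_X]
  · rw [Dinf_X, if_neg (Nat.succ_ne_zero j), Nat.add_sub_cancel, xv_eq hn (by omega), Uinf_X,
      xv_eq hn hk]
    congr 1
    push_cast
    ring

theorem lie_Dinf_Uinf :
    ⁅Dinf, Uinf⁆ = mkDerivation ℚ (fun s => (nwt s : ℚ) • X s)
      - (2 : ℚ) • mkDerivation ℚ (fun s => (wt s : ℚ) • X s) := by
  refine derivation_ext fun s => ?_
  rw [Derivation.commutator_apply, Dinf_Uinf_X, Uinf_Dinf_X, ← sub_smul]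
  simp only [Derivation.coe_sub, Derivation.coe_smul, Pi.sub_apply, Pi.smul_apply,
    mkDerivation_X, smul_smul, ← sub_smul, nwt, wt]
  congr 1
  ring

theorem Dinf_Uinf_apply {a t : ℕ} {z : Rinf} (hz : z ∈ W a ⊓ Wn t) :
    Dinf (Uinf z) = Uinf (Dinf z) + ((t : ℚ) - 2 * a) • z := by
  have h := congrArg (· z) lie_Dinf_Uinf
  simp only [Derivation.commutator_apply, Derivation.coe_sub, Derivation.coe_smul,
    Pi.sub_apply, Pi.smul_apply, hz.1.mkDerivation_weight_smul_X,
    hz.2.mkDerivation_weight_smul_X] at h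
  linear_combination (norm := module) h

theorem Dinf_mem {a t : ℕ} {p : Rinf} (hp : p ∈ W a ⊓ Wn t) : Dinf p ∈ W (a - 1) ⊓ Wn t := by
  constructor
  · refine derivation_mem_of_isWeightedHomogeneous Dinf _ (fun s m hm q hq => ?_) hp.1
    obtain ⟨⟨n, k⟩, hn, hk⟩ := s
    change m + k = a at hm
    rw [Dinf_X]
    dsimp only
    split_ifs with hk0
    · simp
    · have h := hq.mul (xv_mem n (k - 1)).1
      rwa [show m + (k - 1) = a - 1 by omega] at h
  · refine derivation_mem_of_isWeightedHomogeneous Dinf _ (fun s m hm q hq => ?_) hp.2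
    rw [Dinf_X]
    split_ifs
    · simp
    · rw [← hm]
      exact hq.mul (xv_mem _ _).2

theorem Dinf_eq_zero_of_mem_W_zero {p : Rinf} (hp : p ∈ W 0) : Dinf p = 0 := by
  rw [← Submodule.mem_bot ℚ]
  refine derivation_mem_of_isWeightedHomogeneous Dinf _ (fun s m hm q _ => ?_) hp
  have hs : s.1.2 = 0 := (Nat.eq_zero_of_add_eq_zero hm).2
  simp [Dinf_X, hs]

theorem Uinf_mem {a t : ℕ} {p : Rinf} (hp : p ∈ W a ⊓ Wn t) : Uinf p ∈ W (a + 1) ⊓ Wn t := by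
  constructor
  · refine derivation_mem_of_isWeightedHomogeneous Uinf _ (fun s m hm q hq => ?_) hp.1
    rw [Uinf_X, mul_smul_comm, ← hm, add_assoc]
    exact Submodule.smul_mem _ _ (hq.mul (xv_mem s.1.1 (s.1.2 + 1)).1)
  · refine derivation_mem_of_isWeightedHomogeneous Uinf _ (fun s m hm q hq => ?_) hp.2
    rw [Uinf_X, mul_smul_comm, ← hm]
    exact Submodule.smul_mem _ _ (hq.mul (xv_mem s.1.1 (s.1.2 + 1)).2)

theorem Uinf_iterate_mem {a t : ℕ} (m : ℕ) {p : Rinf} (hp : p ∈ W a ⊓ Wn t) :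
    Uinf^[m] p ∈ W (a + m) ⊓ Wn t := by
  induction m with
  | zero => exact hp
  | succ m ih => rw [Function.iterate_succ_apply']; exact Uinf_mem ih

theorem Dinf_Uinf_iterate_succ {a t : ℕ} {y : Rinf} (hy : y ∈ W a ⊓ Wn t) (m : ℕ) :
    Dinf (Uinf^[m + 1] y)
      = Uinf^[m + 1] (Dinf y) + (((m : ℚ) + 1) * ((t : ℚ) - 2 * a - m)) • Uinf^[m] y := by
  induction m with
  | zero => simp [Dinf_Uinf_apply hy]
  | succ m ih =>
    rw [Function.iterate_succ_apply', Dinf_Uinf_apply (Uinf_iterate_mem (m + 1) hy), ih, map_add,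
      Derivation.map_smul, ← Function.iterate_succ_apply' Uinf, ← Function.iterate_succ_apply' Uinf]
    push_cast
    module

/-- `Uinf^[m] y` has `⁅Dinf, Uinf⁆`-eigenvalue `t - 2(a + m) > 0`, so it is `Dinf`-exact as soon as
`Uinf^[m + 1] (Dinf y)` is. -/
theorem Uinf_iterate_mem_map_Dinf_step {a m t : ℕ} {y : Rinf} (hy : y ∈ W a ⊓ Wn t)
    (ht : 2 * (a + m) < t)
    (hDy : Uinf^[m + 1] (Dinf y) ∈ Submodule.map Dinf.toLinearMap (W (a + m + 1))) :
    Uinf^[m] y ∈ Submodule.map Dinf.toLinearMap (W (a + m + 1)) := by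
  have hc : ((m : ℚ) + 1) * ((t : ℚ) - 2 * a - m) ≠ 0 := by
    have : (2 * (a + m) : ℚ) < t := by exact_mod_cast ht
    apply mul_ne_zero <;> nlinarith
  rw [← Submodule.smul_mem_iff _ hc, show (((m : ℚ) + 1) * ((t : ℚ) - 2 * a - m)) • Uinf^[m] y
      = Dinf (Uinf^[m + 1] y) - Uinf^[m + 1] (Dinf y) by rw [Dinf_Uinf_iterate_succ hy]; abel]
  exact sub_mem ⟨_, (Uinf_iterate_mem (m + 1) hy).1, rfl⟩ hDy

theorem Uinf_iterate_mem_map_Dinf {a m t : ℕ} {y : Rinf} (hy : y ∈ W a ⊓ Wn t)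
    (ht : 2 * (a + m) < t) : Uinf^[m] y ∈ Submodule.map Dinf.toLinearMap (W (a + m + 1)) := by
  induction a generalizing m y with
  | zero =>
    refine Uinf_iterate_mem_map_Dinf_step hy ht ?_
    simp [Dinf_eq_zero_of_mem_W_zero hy.1, Function.iterate_fixed (map_zero Uinf)]
  | succ a ih =>
    refine Uinf_iterate_mem_map_Dinf_step hy ht ?_
    have h := ih (m := m + 1) (by simpa using Dinf_mem hy) (by omega)
    rwa [show a + (m + 1) + 1 = a + 1 + m + 1 by omega] at h

theorem mem_map_Dinf_of_lt_weight_nwt {a : ℕ} {z : Rinf} (hz : z ∈ W a)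
    (hsupp : ∀ s ∈ z.support, 2 * a < Finsupp.weight nwt s) :
    z ∈ Submodule.map Dinf.toLinearMap (W (a + 1)) := by
  rw [z.as_sum]
  refine Submodule.sum_mem _ fun s hs => ?_
  have hmon : monomial s (coeff s z) ∈ W a ⊓ Wn (Finsupp.weight nwt s) :=
    ⟨isWeightedHomogeneous_monomial _ _ _ (hz (mem_support_iff.mp hs)),
      isWeightedHomogeneous_monomial _ _ _ rfl⟩
  simpa using Uinf_iterate_mem_map_Dinf (m := 0) hmon (by simpa using hsupp s hs)

theorem weight_wt_le_weight_nwt (s : Idx →₀ ℕ) : Finsupp.weight wt s ≤ Finsupp.weight nwt s :=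
  Finset.sum_le_sum fun i _ => Nat.mul_le_mul_left _ i.2.2

theorem mul_mem_map_Dinf {a e : ℕ} {c u : Rinf} (hc : c ∈ W 0 ⊓ Wn e) (he : a < e)
    (hu : u ∈ W a) : c * u ∈ Submodule.map Dinf.toLinearMap (W (a + 1)) := by
  classical
  refine mem_map_Dinf_of_lt_weight_nwt (by rw [← zero_add a]; exact hc.1.mul hu) fun s hs => ?_
  obtain ⟨s₁, hs₁, s₂, hs₂, rfl⟩ := Finset.mem_add.mp (support_mul c u hs)
  have h₁ : Finsupp.weight nwt s₁ = e := hc.2 (mem_support_iff.mp hs₁)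
  have h₂ : Finsupp.weight wt s₂ = a := hu (mem_support_iff.mp hs₂)
  have := weight_wt_le_weight_nwt s₂
  rw [map_add]
  omega

theorem prod_xv_mem {ι : Type*} (s : Finset ι) (n : ι → ℕ) :
    ∏ i ∈ s, xv (n i) 0 ∈ W 0 ⊓ Wn (∑ i ∈ s, n i) := by
  refine ⟨?_, IsWeightedHomogeneous.prod _ _ _ fun i _ => (xv_mem (n i) 0).2⟩
  have h := IsWeightedHomogeneous.prod s _ (fun _ => 0) fun i _ => (xv_mem (n i) 0).1
  rwa [Finset.sum_const_zero] at h

theorem statement9_general (d r : ℕ) (hd : 1 ≤ d) (k : Fin r → ℕ)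
    (hsum : d ≤ (∑ i, k i) + r) :
    (∀ u ∈ W (d - 1),
        (∏ i, xv (k i + 1) 0) * u ∈ Submodule.map Dinf.toLinearMap (W d)) ∧
    (∀ k₀ : ℕ, d - 1 ≤ k₀ → ∀ u ∈ W (d - 1),
        xv (k₀ + 1) 0 * u ∈ Submodule.map Dinf.toLinearMap (W d)) := by
  obtain ⟨a, rfl⟩ : ∃ a, d = a + 1 := ⟨d - 1, by omega⟩
  simp only [Nat.add_sub_cancel]
  have he : a < ∑ i, (k i + 1) := by simp [Finset.sum_add_distrib]; omega
  exact ⟨fun u hu => mul_mem_map_Dinf (prod_xv_mem _ _) he hu,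
    fun k₀ hk₀ u hu => mul_mem_map_Dinf (xv_mem _ _) (by omega) hu⟩

/-- If `k₁, …, k_r ≥ 1` satisfy `k₁ + ⋯ + k_r ≥ d − r`, then for every `u ∈ R_∞^{(d−1)}`
the element `x_{k₁+1,0}⋯x_{k_r+1,0}·u` lies in `D_∞(R_∞^{(d)})`; in particular for every
`k ≥ d−1`, `x_{k+1,0}·u ∈ D_∞(R_∞^{(d)})`. -/
theorem statement9 (d r : ℕ) (hd : 1 ≤ d) (hr : 1 ≤ r) (k : Fin r → ℕ)
    (hk : ∀ i, 1 ≤ k i) (hsum : d ≤ (∑ i, k i) + r) :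
    (∀ u ∈ W (d - 1),
        (∏ i, xv (k i + 1) 0) * u ∈ Submodule.map Dinf.toLinearMap (W d)) ∧
    (∀ k₀ : ℕ, d - 1 ≤ k₀ → ∀ u ∈ W (d - 1),
        xv (k₀ + 1) 0 * u ∈ Submodule.map Dinf.toLinearMap (W d)) :=
  statement9_general d r hd k hsum

end
end
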